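/- arXiv:1609.03514 — 2 statements merged into one kernel-verified Lean document; each statement's English description precedes it below -/
import Mathlib

section
/- Let f : ℝ → ℂ be a 2π-periodic continuous function that is Hölder continuous of order s ∈ (0,1] with constant A, i.e. |f(x-y) - f(x)| ≤ A|y|^s for all x, y. Then for every h ∈ ℝ, the sum over ξ ∈ ℤ of |e^{-iξh} - 1|²·|f̂(ξ)|² is at most A²·|h|^{2s}, where f̂(ξ) = (1/(2π))∫_0^{2π} f(x)e^{-iξx} dx is the ξ-th Fourier coefficient. -/
/-- ξ-th Fourier coefficient of a 2π-periodic function. -/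
noncomputable def fourierCoef (f : ℝ → ℂ) (ξ : ℤ) : ℂ :=
  (1 / (2 * Real.pi)) * ∫ x in (0:ℝ)..(2 * Real.pi), f x * Complex.exp (-(Complex.I * (ξ:ℂ) * (x:ℂ)))

open MeasureTheory Real Complex Function Set

/-! Translating `f` by `h` multiplies its `ξ`-th Fourier coefficient by `e^{-iξh}`, so the
coefficients of `g = f (· - h) - f` are `(e^{-iξh} - 1) f̂(ξ)`. By Parseval the sum of their
squares is the mean of `|g|²` over a period, and the Hölder bound gives `|g| ≤ A |h|^s`. -/

theorem tsum_sq_norm_fourierCoeffOn_le_of_norm_le {a b C : ℝ} (hab : a < b) {g : ℝ → ℂ}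
    (hg : AEStronglyMeasurable g (volume.restrict (Ioc a b)))
    (hC : ∀ x ∈ Ioc a b, ‖g x‖ ≤ C) :
    ∑' n : ℤ, ‖fourierCoeffOn hab g n‖ ^ 2 ≤ C ^ 2 := by
  have hL2 : MemLp g 2 (volume.restrict (Ioc a b)) :=
    .of_bound hg C (ae_restrict_of_forall_mem measurableSet_Ioc hC)
  have hba : 0 < b - a := sub_pos.mpr hab
  have hint : ‖∫ x in a..b, ‖g x‖ ^ 2‖ ≤ C ^ 2 * |b - a| :=
    intervalIntegral.norm_integral_le_of_norm_le_const fun x hx => by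
      rw [uIoc_of_le hab.le] at hx
      rw [norm_pow, norm_norm]
      exact pow_le_pow_left₀ (norm_nonneg _) (hC x hx) 2
  rw [abs_of_pos hba] at hint
  rw [tsum_sq_fourierCoeffOn hab hL2, smul_eq_mul]
  calc (b - a)⁻¹ * ∫ x in a..b, ‖g x‖ ^ 2 ≤ (b - a)⁻¹ * (C ^ 2 * (b - a)) := by
        gcongr; exact (le_abs_self _).trans hint
    _ = C ^ 2 := by field_simp

theorem fourierCoef_eq_fourierCoeffOn (f : ℝ → ℂ) (n : ℤ) :
    fourierCoef f n = fourierCoeffOn two_pi_pos f n := by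
  rw [fourierCoeffOn_eq_integral, fourierCoef, sub_zero, Complex.real_smul]
  push_cast
  congr 1
  refine intervalIntegral.integral_congr fun x _ => ?_
  rw [fourier_coe_apply, smul_eq_mul, mul_comm]
  congr 2
  field_simp
  push_cast
  ring

theorem periodic_exp_neg_I_mul_intCast (n : ℤ) :
    Periodic (fun x : ℝ => exp (-(I * n * x))) (2 * π) := by
  intro x
  simp only
  rw [show -(I * n * ((x + 2 * π : ℝ) : ℂ)) = -(I * n * x) + (-n : ℤ) * (2 * π * I) by
    push_cast; ring, Complex.exp_add, exp_int_mul_two_pi_mul_I, mul_one]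

theorem fourierCoef_comp_sub_right {f : ℝ → ℂ} (hf : Periodic f (2 * π)) (h : ℝ) (n : ℤ) :
    fourierCoef (fun x => f (x - h)) n = exp (-(I * n * h)) * fourierCoef f n := by
  have hshift : ∀ x : ℝ, f (x - h) * exp (-(I * n * x))
      = exp (-(I * n * h)) * (f (x - h) * exp (-(I * n * ((x - h : ℝ) : ℂ)))) := by
    intro x
    rw [mul_left_comm, mul_assoc, ← Complex.exp_add]
    push_cast
    ring_nf
  have hper : Periodic (fun x : ℝ => f x * exp (-(I * n * x))) (2 * π) :=
    hf.mul (periodic_exp_neg_I_mul_intCast n)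
  simp only [fourierCoef, hshift, intervalIntegral.integral_const_mul,
    intervalIntegral.integral_comp_sub_right (fun x => f x * exp (-(I * n * x)))]
  rw [zero_sub, show 2 * π - h = -h + 2 * π by ring,
    hper.intervalIntegral_add_eq (-h) 0, zero_add]
  ring

theorem fourierCoef_sub {f g : ℝ → ℂ} (hf : IntervalIntegrable f volume 0 (2 * π))
    (hg : IntervalIntegrable g volume 0 (2 * π)) (n : ℤ) :
    fourierCoef (fun x => f x - g x) n = fourierCoef f n - fourierCoef g n := by
  have hexp : ContinuousOn (fun x : ℝ => exp (-(I * n * x))) (uIcc 0 (2 * π)) := by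
    fun_prop
  simp only [fourierCoef, sub_mul, intervalIntegral.integral_sub (hf.mul_continuousOn hexp)
    (hg.mul_continuousOn hexp), mul_sub]

theorem plancherel_holder_difference_general (f : ℝ → ℂ) (hf : Continuous f)
    (hper : ∀ x, f (x + 2 * Real.pi) = f x)
    (s A : ℝ)
    (hHol : ∀ x y : ℝ, ‖f (x - y) - f x‖ ≤ A * |y| ^ s)
    (h : ℝ) :
    ∑' ξ : ℤ, ‖Complex.exp (-(Complex.I * (ξ:ℂ) * (h:ℂ))) - 1‖ ^ 2
        * ‖fourierCoef f ξ‖ ^ 2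
      ≤ A ^ 2 * |h| ^ (2 * s) := by
  have hshift : Continuous fun x => f (x - h) := by fun_prop
  have hcoef (ξ : ℤ) : fourierCoef (fun x => f (x - h) - f x) ξ
      = (exp (-(I * ξ * h)) - 1) * fourierCoef f ξ := by
    rw [fourierCoef_sub (hshift.intervalIntegrable _ _) (hf.intervalIntegrable _ _),
      fourierCoef_comp_sub_right hper, sub_one_mul]
  calc ∑' ξ : ℤ, ‖exp (-(I * ξ * h)) - 1‖ ^ 2 * ‖fourierCoef f ξ‖ ^ 2
      = ∑' ξ : ℤ, ‖fourierCoeffOn two_pi_pos (fun x => f (x - h) - f x) ξ‖ ^ 2 := by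
        simp only [← fourierCoef_eq_fourierCoeffOn, hcoef, norm_mul, mul_pow]
    _ ≤ (A * |h| ^ s) ^ 2 :=
        tsum_sq_norm_fourierCoeffOn_le_of_norm_le two_pi_pos
          (hshift.sub hf).aestronglyMeasurable fun x _ => hHol x h
    _ = A ^ 2 * |h| ^ (2 * s) := by
        rw [mul_pow, mul_comm 2 s, ← rpow_mul_natCast (abs_nonneg h)]
        norm_num

theorem plancherel_holder_difference (f : ℝ → ℂ) (hf : Continuous f)
    (hper : ∀ x, f (x + 2 * Real.pi) = f x)
    (s A : ℝ) (hs0 : 0 < s) (hs1 : s ≤ 1)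
    (hHol : ∀ x y : ℝ, ‖f (x - y) - f x‖ ≤ A * |y| ^ s)
    (h : ℝ) :
    ∑' ξ : ℤ, ‖Complex.exp (-(Complex.I * (ξ:ℂ) * (h:ℂ))) - 1‖ ^ 2
        * ‖fourierCoef f ξ‖ ^ 2
      ≤ A ^ 2 * |h| ^ (2 * s) :=
  plancherel_holder_difference_general f hf hper s A hHol h
end

section
/- Let 0 ≤ ρ ≤ 1 and let σ : ℤ → ℂ satisfy |σ(ξ)| ≤ C|ξ|^{-ρ} for all ξ ≠ 0. Let f : ℝ → ℂ be a 2π-periodic function that is Hölder continuous of order s ∈ (0,1] with constant A. Then for every m ∈ ℕ, the sum over integers ξ with 2^m ≤ |ξ| < 2^{m+1} of |σ(ξ)·f̂(ξ)|² is bounded by C'·2^{-2m(ρ+s)}·A², where C' is a constant depending only on C (e.g. C' = C²·(2π/3)^{2s}·3, any explicit admissible constant is acceptable). -/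
/-- The dyadic block `{ξ ∈ ℤ : 2^m ≤ |ξ| < 2^(m+1)}`. -/
noncomputable def dyadicBlock (m : ℕ) : Finset ℤ :=
  (Finset.Icc (-(2^(m+1) : ℤ)) (2^(m+1))).filter fun ξ => 2^m ≤ |ξ| ∧ |ξ| < 2^(m+1)

open MeasureTheory AddCircle Complex Real

theorem Real.cos_le_neg_half_of_abs_mem {t : ℝ} (h₁ : 2 * π / 3 ≤ |t|) (h₂ : |t| ≤ 4 * π / 3) :
    cos t ≤ -(1 / 2) := by
  have hpi := pi_pos
  have hdist : |(|t| - π)| ≤ π / 3 := abs_le.mpr ⟨by linarith, by linarith⟩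
  have := cos_le_cos_of_nonneg_of_le_pi (abs_nonneg _) (by linarith) hdist
  rw [cos_abs, cos_pi_div_three, cos_sub_pi, cos_abs] at this
  linarith

theorem Complex.three_le_norm_exp_I_mul_sub_one_sq {t : ℝ} (h₁ : 2 * π / 3 ≤ |t|)
    (h₂ : |t| ≤ 4 * π / 3) : 3 ≤ ‖exp (I * t) - 1‖ ^ 2 := by
  rw [norm_exp_I_mul_ofReal_sub_one, norm_mul, mul_pow, Real.norm_eq_abs, Real.norm_eq_abs,
    sq_abs, sq_abs, sin_sq_eq_half_sub, mul_div_cancel₀ _ two_ne_zero]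
  have := cos_le_neg_half_of_abs_mem h₁ h₂
  norm_num
  linarith

section FourierCoeff

variable {T : ℝ}

theorem fourier_add_apply (n : ℤ) (x y : AddCircle T) :
    fourier n (x + y) = fourier n x * fourier n y := by
  simp only [fourier_apply, smul_add, toCircle_add, Circle.coe_mul]

variable [Fact (0 < T)]

theorem fourierCoeff_comp_sub {E : Type*} [NormedAddCommGroup E] [NormedSpace ℂ E]
    (F : AddCircle T → E) (a : AddCircle T) (n : ℤ) :
    fourierCoeff (fun x => F (x - a)) n = fourier (-n) a • fourierCoeff F n := by
  rw [fourierCoeff, fourierCoeff, ← integral_add_right_eq_self _ a, ← integral_smul]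
  congr 1 with x
  rw [add_sub_cancel_right, fourier_add_apply, mul_comm, mul_smul]

theorem fourierCoeff_comp_sub_sub {E : Type*} [NormedAddCommGroup E] [NormedSpace ℂ E]
    {F : AddCircle T → E} (hF : Integrable F haarAddCircle) (a : AddCircle T) (n : ℤ) :
    fourierCoeff (fun x => F (x - a) - F x) n = (fourier (-n) a - 1) • fourierCoeff F n := by
  rw [sub_smul, one_smul, ← fourierCoeff_comp_sub]
  simp only [fourierCoeff, smul_sub]
  exact integral_sub ((hF.comp_sub_right a).fourier_smul (-n)) (hF.fourier_smul (-n))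

theorem norm_toLp_haarAddCircle_le (F : C(AddCircle T, ℂ)) :
    ‖ContinuousMap.toLp (E := ℂ) 2 haarAddCircle ℂ F‖ ≤ ‖F‖ := by
  have hae : ∀ᵐ t ∂haarAddCircle, ‖ContinuousMap.toLp (E := ℂ) 2 haarAddCircle ℂ F t‖ ≤ ‖F‖ := by
    filter_upwards [ContinuousMap.coeFn_toLp (p := 2) (𝕜 := ℂ) haarAddCircle F] with t ht
    rw [ht]
    exact F.norm_coe_le_norm t
  simpa [measureUnivNNReal] using Lp.norm_le_of_ae_bound (norm_nonneg F) hae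

theorem sum_sq_norm_fourierCoeff_le_sq_norm (F : C(AddCircle T, ℂ)) (S : Finset ℤ) :
    ∑ n ∈ S, ‖fourierCoeff F n‖ ^ 2 ≤ ‖F‖ ^ 2 := by
  set f := ContinuousMap.toLp (E := ℂ) 2 haarAddCircle ℂ F
  calc ∑ n ∈ S, ‖fourierCoeff F n‖ ^ 2
      = ∑ n ∈ S, ‖inner ℂ (fourierBasis n) f‖ ^ 2 := by
        simp only [← fourierCoeff_toLp F, ← fourierBasis_repr, fourierBasis.repr_apply_apply, f]
    _ ≤ ‖f‖ ^ 2 := fourierBasis.orthonormal.sum_inner_products_le f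
    _ ≤ ‖F‖ ^ 2 := by gcongr; exact norm_toLp_haarAddCircle_le F

theorem sum_sq_norm_fourier_sub_one_mul_fourierCoeff_le (F : C(AddCircle T, ℂ)) (a : AddCircle T)
    {B : ℝ} (hB : ∀ x, ‖F (x - a) - F x‖ ≤ B) (S : Finset ℤ) :
    ∑ n ∈ S, ‖(fourier (-n) a - 1) * fourierCoeff F n‖ ^ 2 ≤ B ^ 2 := by
  let G : C(AddCircle T, ℂ) := ⟨fun x => F (x - a) - F x, by fun_prop⟩
  have hG (n : ℤ) : fourierCoeff G n = (fourier (-n) a - 1) * fourierCoeff F n :=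
    fourierCoeff_comp_sub_sub (F.continuous.integrable_of_hasCompactSupport
      (HasCompactSupport.of_compactSpace _)) a n
  have hGB : ‖G‖ ≤ B := (ContinuousMap.norm_le_of_nonempty G).mpr hB
  calc ∑ n ∈ S, ‖(fourier (-n) a - 1) * fourierCoeff F n‖ ^ 2
      = ∑ n ∈ S, ‖fourierCoeff G n‖ ^ 2 := by simp only [hG]
    _ ≤ ‖G‖ ^ 2 := sum_sq_norm_fourierCoeff_le_sq_norm G S
    _ ≤ B ^ 2 := pow_le_pow_left₀ (norm_nonneg G) hGB 2

end FourierCoeff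

theorem fourier_coe_two_pi (n : ℤ) (x : ℝ) :
    fourier n (x : AddCircle (2 * π)) = exp (I * n * x) := by
  rw [fourier_coe_apply]
  congr 1
  push_cast
  field_simp

theorem Function.Periodic.norm_lift_sub_sub_le {T : ℝ} {E : Type*} [SeminormedAddGroup E]
    {f : ℝ → E} (hper : Function.Periodic f T) {a B : ℝ} (hf : ∀ y, ‖f (y - a) - f y‖ ≤ B)
    (x : AddCircle T) : ‖hper.lift (x - a) - hper.lift x‖ ≤ B := by
  induction x using QuotientAddGroup.induction_on with
  | H y =>
    rw [← AddCircle.coe_sub, hper.lift_coe, hper.lift_coe]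
    exact hf y

instance : Fact (0 < 2 * π) := ⟨by positivity⟩

theorem fourierCoef_eq_fourierCoeff_lift {f : ℝ → ℂ} (hper : Function.Periodic f (2 * π))
    (ξ : ℤ) : fourierCoef f ξ = fourierCoeff hper.lift ξ := by
  rw [fourierCoeff_eq_intervalIntegral _ ξ 0, zero_add, fourierCoef, real_smul]
  simp only [Function.Periodic.lift_coe, fourier_coe_two_pi, smul_eq_mul]
  push_cast
  congr 1
  refine intervalIntegral.integral_congr fun x _ => ?_
  rw [mul_comm, mul_neg, neg_mul]

theorem sum_sq_norm_mul_le_of_bounds {ι R : Type*} [NormedDivisionRing R] (S : Finset ι)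
    {a b c : ι → R} {K δ M : ℝ} (hδ : 0 < δ) (ha : ∀ i ∈ S, ‖a i‖ ≤ K)
    (hc : ∀ i ∈ S, δ ≤ ‖c i‖ ^ 2) (hcb : ∑ i ∈ S, ‖c i * b i‖ ^ 2 ≤ M) :
    ∑ i ∈ S, ‖a i * b i‖ ^ 2 ≤ K ^ 2 * M / δ := by
  have hterm : ∀ i ∈ S, ‖a i * b i‖ ^ 2 ≤ K ^ 2 / δ * ‖c i * b i‖ ^ 2 := by
    intro i hi
    have hK : ‖a i‖ ^ 2 ≤ K ^ 2 := pow_le_pow_left₀ (norm_nonneg _) (ha i hi) 2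
    rw [norm_mul, norm_mul, mul_pow, mul_pow, div_mul_eq_mul_div, le_div_iff₀ hδ]
    calc ‖a i‖ ^ 2 * ‖b i‖ ^ 2 * δ ≤ K ^ 2 * ‖b i‖ ^ 2 * δ := by gcongr
      _ ≤ K ^ 2 * (‖c i‖ ^ 2 * ‖b i‖ ^ 2) := by
        rw [mul_assoc, mul_comm (‖c i‖ ^ 2)]
        gcongr
        exact hc i hi
  calc ∑ i ∈ S, ‖a i * b i‖ ^ 2 ≤ ∑ i ∈ S, K ^ 2 / δ * ‖c i * b i‖ ^ 2 := Finset.sum_le_sum hterm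
    _ = K ^ 2 / δ * ∑ i ∈ S, ‖c i * b i‖ ^ 2 := (Finset.mul_sum _ _ _).symm
    _ ≤ K ^ 2 / δ * M := by gcongr
    _ = K ^ 2 * M / δ := by ring

theorem abs_mem_Ico_of_mem_dyadicBlock {m : ℕ} {ξ : ℤ} (hξ : ξ ∈ dyadicBlock m) :
    |(ξ : ℝ)| ∈ Set.Ico ((2 : ℝ) ^ m) (2 ^ (m + 1)) := by
  obtain ⟨-, hlo, hhi⟩ := Finset.mem_filter.mp hξ
  rw [← Int.cast_abs]
  exact ⟨by exact_mod_cast hlo, by exact_mod_cast hhi⟩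

theorem norm_le_of_mem_dyadicBlock {E : Type*} [SeminormedAddGroup E] {σ : ℤ → E} {C ρ : ℝ}
    (hρ : 0 ≤ ρ) (hσ : ∀ ξ : ℤ, ξ ≠ 0 → ‖σ ξ‖ ≤ C * |(ξ : ℝ)| ^ (-ρ)) {m : ℕ} {ξ : ℤ}
    (hξ : ξ ∈ dyadicBlock m) : ‖σ ξ‖ ≤ C * (2 : ℝ) ^ (-(m * ρ)) := by
  have hlo := (abs_mem_Ico_of_mem_dyadicBlock hξ).1
  have hξ0 : ξ ≠ 0 := by
    rintro rfl
    simp only [Int.cast_zero, abs_zero] at hlo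
    exact (pow_pos two_pos m).not_ge hlo
  have hC : 0 ≤ C := nonneg_of_mul_nonneg_left ((norm_nonneg _).trans (hσ ξ hξ0))
    (rpow_pos_of_pos (abs_pos.mpr (Int.cast_ne_zero.mpr hξ0)) _)
  calc ‖σ ξ‖ ≤ C * |(ξ : ℝ)| ^ (-ρ) := hσ ξ hξ0
    _ ≤ C * ((2 : ℝ) ^ m) ^ (-ρ) :=
      mul_le_mul_of_nonneg_left (rpow_le_rpow_of_nonpos (by positivity) hlo (neg_nonpos.mpr hρ)) hC
    _ = C * (2 : ℝ) ^ (-(m * ρ)) := by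
      rw [← rpow_natCast, ← rpow_mul zero_le_two, mul_neg]

-- Chosen so that `ξ * dyadicShift m ∈ [2π/3, 4π/3)` for `ξ` in the `m`-th dyadic block.
noncomputable def dyadicShift (m : ℕ) : ℝ := 2 * π / 3 * 2 ^ (-(m : ℝ))

theorem dyadicShift_pos (m : ℕ) : 0 < dyadicShift m := by
  unfold dyadicShift
  positivity

theorem two_pow_mul_dyadicShift (m : ℕ) : 2 ^ m * dyadicShift m = 2 * π / 3 := by
  rw [dyadicShift, ← rpow_natCast, mul_left_comm, ← rpow_add two_pos, add_neg_cancel, rpow_zero,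
    mul_one]

theorem dyadicShift_rpow (m : ℕ) (s : ℝ) :
    dyadicShift m ^ s = (2 * π / 3) ^ s * 2 ^ (-(m * s)) := by
  rw [dyadicShift, mul_rpow (by positivity) (by positivity), ← rpow_mul zero_le_two, neg_mul]

theorem three_le_norm_fourier_dyadicShift_sub_one_sq {m : ℕ} {ξ : ℤ} (hξ : ξ ∈ dyadicBlock m) :
    3 ≤ ‖fourier (-ξ) (dyadicShift m : AddCircle (2 * π)) - 1‖ ^ 2 := by
  have hh := dyadicShift_pos m
  obtain ⟨hlo, hhi⟩ := abs_mem_Ico_of_mem_dyadicBlock hξ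
  rw [fourier_coe_two_pi, show I * ((-ξ : ℤ) : ℂ) * dyadicShift m
    = I * ((-ξ * dyadicShift m : ℝ) : ℂ) by push_cast; ring]
  have habs : |(-ξ * dyadicShift m : ℝ)| = |(ξ : ℝ)| * dyadicShift m := by
    rw [abs_mul, abs_neg, abs_of_pos hh]
  apply three_le_norm_exp_I_mul_sub_one_sq
  · rw [habs, ← two_pow_mul_dyadicShift]
    exact mul_le_mul_of_nonneg_right hlo hh.le
  · rw [habs]
    calc |(ξ : ℝ)| * dyadicShift m ≤ 2 ^ (m + 1) * dyadicShift m :=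
          mul_le_mul_of_nonneg_right hhi.le hh.le
      _ = 4 * π / 3 := by rw [pow_succ, mul_right_comm, two_pow_mul_dyadicShift]; ring

theorem dyadic_block_estimate_general (ρ C : ℝ) (hρ0 : 0 ≤ ρ)
    (σ : ℤ → ℂ) (hσ : ∀ ξ : ℤ, ξ ≠ 0 → ‖σ ξ‖ ≤ C * |(ξ:ℝ)| ^ (-ρ))
    (f : ℝ → ℂ) (hf : Continuous f) (hper : ∀ x, f (x + 2 * Real.pi) = f x)
    (s A : ℝ)
    (hHol : ∀ x y : ℝ, ‖f (x - y) - f x‖ ≤ A * |y| ^ s)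
    (m : ℕ) :
    ∑ ξ ∈ dyadicBlock m, ‖σ ξ * fourierCoef f ξ‖ ^ 2
      ≤ (C ^ 2 * (2 * Real.pi / 3) ^ (2 * s) * 3) * (2:ℝ) ^ (-(2 * (m:ℝ) * (ρ + s))) * A ^ 2 := by
  have hper' : Function.Periodic f (2 * π) := hper
  let F : C(AddCircle (2 * π), ℂ) := ⟨hper'.lift, continuous_coinduced_dom.mpr hf⟩
  have hdiff : ∀ x, ‖F (x - dyadicShift m) - F x‖ ≤ A * dyadicShift m ^ s :=
    hper'.norm_lift_sub_sub_le fun y => by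
      simpa only [abs_of_pos (dyadicShift_pos m)] using hHol y (dyadicShift m)
  have hblock := sum_sq_norm_mul_le_of_bounds (dyadicBlock m) three_pos
    (fun ξ hξ => norm_le_of_mem_dyadicBlock hρ0 hσ hξ)
    (fun ξ hξ => three_le_norm_fourier_dyadicShift_sub_one_sq hξ)
    (sum_sq_norm_fourier_sub_one_mul_fourierCoeff_le F _ hdiff (dyadicBlock m))
  simp only [fourierCoef_eq_fourierCoeff_lift hper']
  refine hblock.trans ?_
  have hpow : (2 : ℝ) ^ (-(2 * (m : ℝ) * (ρ + s)))
      = ((2 : ℝ) ^ (-(m * ρ))) ^ 2 * ((2 : ℝ) ^ (-(m * s))) ^ 2 := by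
    simp only [sq, ← rpow_add two_pos]
    ring_nf
  have hconst : (2 * π / 3) ^ (2 * s) = ((2 * π / 3) ^ s) ^ 2 := by
    rw [sq, ← rpow_add (by positivity), ← two_mul]
  rw [dyadicShift_rpow, hpow, hconst]
  set X := C * 2 ^ (-(m * ρ)) * (A * ((2 * π / 3) ^ s * 2 ^ (-(m * s))))
  calc _ = X ^ 2 / 3 := by ring
    _ ≤ X ^ 2 * 3 := by linarith [sq_nonneg X]
    _ = _ := by ring

theorem dyadic_block_estimate (ρ C : ℝ) (hρ0 : 0 ≤ ρ) (hρ1 : ρ ≤ 1)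
    (σ : ℤ → ℂ) (hσ : ∀ ξ : ℤ, ξ ≠ 0 → ‖σ ξ‖ ≤ C * |(ξ:ℝ)| ^ (-ρ))
    (f : ℝ → ℂ) (hf : Continuous f) (hper : ∀ x, f (x + 2 * Real.pi) = f x)
    (s A : ℝ) (hs0 : 0 < s) (hs1 : s ≤ 1)
    (hHol : ∀ x y : ℝ, ‖f (x - y) - f x‖ ≤ A * |y| ^ s)
    (m : ℕ) :
    ∑ ξ ∈ dyadicBlock m, ‖σ ξ * fourierCoef f ξ‖ ^ 2
      ≤ (C ^ 2 * (2 * Real.pi / 3) ^ (2 * s) * 3) * (2:ℝ) ^ (-(2 * (m:ℝ) * (ρ + s))) * A ^ 2 :=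
  dyadic_block_estimate_general ρ C hρ0 σ hσ f hf hper s A hHol m
end
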